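/- Let S be a nonempty finite set of positive integers all of which are odd, let J = max S, let P(X) = ∑_{i∈S} (X^(J+i) + X^(J−i)) in (ZMod 2)[X], and let d_Q be the multiplicity of 1 as a root of P. Then d_Q ≡ 2 (mod 4). -/

import Mathlib

open Polynomial

/-! In characteristic `2` squaring is additive, so for odd `J` and odd `i` the polynomial `P` is
the square of `Q = ∑ i ∈ S, (X ^ ((J + i) / 2) + X ^ ((J - i) / 2))`, and `d_Q` is twice the
multiplicity `e` of the root `1` of `Q`. Now `Q` is palindromic of odd degree `J`. Writing
`Q = (X + 1) ^ e * g` with `g(1) ≠ 0`, the cofactor `g` is palindromic of degree `J - e`; a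
palindromic polynomial of odd degree vanishes at `-1 = 1`, so `J - e` is even and `e` is odd. -/

namespace Polynomial

variable {R : Type*}

lemma reflect_sum [Semiring R] {ι : Type*} (N : ℕ) (s : Finset ι) (f : ι → R[X]) :
    reflect N (∑ i ∈ s, f i) = ∑ i ∈ s, reflect N (f i) := by
  ext k
  simp only [coeff_reflect, finsetSum_coeff]

lemma reflect_X_pow_add_X_pow_sub [Semiring R] {N a : ℕ} (h : a ≤ N) :
    reflect N ((X : R[X]) ^ a + X ^ (N - a)) = X ^ a + X ^ (N - a) := by
  rw [reflect_add, reflect_monomial, reflect_monomial, revAt_le h, revAt_le (N.sub_le a),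
    Nat.sub_sub_self h, add_comm]

lemma reflect_X_add_one_pow [CommSemiring R] (e : ℕ) :
    reflect e ((X + 1 : R[X]) ^ e) = (X + 1) ^ e := by
  have hdeg : (X + 1 : R[X]).natDegree ≤ 1 :=
    (natDegree_add_le _ _).trans (max_le natDegree_X_le (by simp))
  induction e with
  | zero => simp [reflect_one]
  | succ n ih =>
    have h1 : reflect 1 (X + 1 : R[X]) = X + 1 := by
      rw [reflect_add, reflect_one_X, reflect_one, pow_one, add_comm]
    rw [pow_succ, reflect_mul _ _ ((natDegree_pow_le_of_le n hdeg).trans_eq (mul_one n)) hdeg,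
      ih, h1]

lemma eval_neg_one_eq_zero_of_reflect_eq [Ring R] {N : ℕ} (hN : Odd N) {f : R[X]}
    (hdeg : f.natDegree ≤ N) (hf : reflect N f = f) : f.eval (-1) = 0 := by
  rw [eval_eq_sum_range' (Nat.lt_succ_of_le hdeg)]
  -- the terms of `k` and `N - k` cancel: equal coefficients, opposite signs as `N` is odd
  refine Finset.sum_involution (fun k _ => N - k) (fun k hk => ?_) (fun k hk _ => ?_)
    (fun k hk => ?_) (fun k hk => ?_)
  all_goals have hkN : k ≤ N := Nat.lt_succ_iff.mp (Finset.mem_range.mp hk)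
  · have hcoeff : f.coeff (N - k) = f.coeff k := by
      conv_rhs => rw [← hf, coeff_reflect, revAt_le hkN]
    have hsign : (-1 : R) ^ (N - k) = -(-1) ^ k := by
      rcases Nat.even_or_odd k with hk | hk
      · rw [(Nat.Odd.sub_even hkN hN hk).neg_one_pow, hk.neg_one_pow]
      · rw [(Nat.Odd.sub_odd hN hk).neg_one_pow, hk.neg_one_pow, neg_neg]
    rw [hcoeff, hsign, mul_neg, add_neg_cancel]
  · obtain ⟨m, rfl⟩ := hN
    omega
  · exact Finset.mem_range.mpr (by omega)
  · omega

lemma odd_rootMultiplicity_neg_one_of_reflect_eq [CommRing R] [IsDomain R] {N : ℕ} (hN : Odd N)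
    {f : R[X]} (hf0 : f ≠ 0) (hdeg : f.natDegree ≤ N) (hf : reflect N f = f) :
    Odd (f.rootMultiplicity (-1)) := by
  obtain ⟨g, hfg, hg⟩ := f.exists_eq_pow_rootMultiplicity_mul_and_not_dvd hf0 (-1)
  set e := f.rootMultiplicity (-1)
  rw [map_neg, map_one, sub_neg_eq_add] at hfg
  have hpow0 : (X + 1 : R[X]) ^ e ≠ 0 := pow_ne_zero _ (X_add_C_ne_zero 1)
  have hg0 : g ≠ 0 := by
    rintro rfl
    exact hf0 (by rw [hfg, mul_zero])
  have hdegpow : ((X + 1 : R[X]) ^ e).natDegree = e := by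
    simpa using natDegree_pow_X_add_C e (1 : R)
  have hdegf : f.natDegree = e + g.natDegree := by
    rw [hfg, natDegree_mul hpow0 hg0, hdegpow]
  have hreflg : reflect (N - e) g = g := by
    refine mul_left_cancel₀ hpow0 ?_
    calc (X + 1) ^ e * reflect (N - e) g = reflect (e + (N - e)) ((X + 1) ^ e * g) := by
          rw [reflect_mul _ _ hdegpow.le (by omega), reflect_X_add_one_pow]
      _ = (X + 1) ^ e * g := by rw [Nat.add_sub_cancel' (by omega), ← hfg, hf]
  by_contra he
  have hNe : Odd (N - e) := Nat.Odd.sub_even (by omega) hN (Nat.not_odd_iff_even.mp he)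
  exact hg (dvd_iff_isRoot.mpr (eval_neg_one_eq_zero_of_reflect_eq hNe (by omega) hreflg))

end Polynomial

/-- `J - (J + i) / 2 = (J - i) / 2` when `J` and `i` are odd; written this way, `reflect J`
swaps the two monomials of each summand. -/
noncomputable def halvedPoly (R : Type*) [Semiring R] (S : Finset ℕ) (J : ℕ) : R[X] :=
  ∑ i ∈ S, (X ^ ((J + i) / 2) + X ^ (J - (J + i) / 2))

section HalvedPoly

variable {R : Type*} {S : Finset ℕ} {J : ℕ}

lemma reflect_halvedPoly [Semiring R] (hle : ∀ i ∈ S, i ≤ J) :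
    reflect J (halvedPoly R S J) = halvedPoly R S J := by
  rw [halvedPoly, reflect_sum]
  exact Finset.sum_congr rfl fun i hi => reflect_X_pow_add_X_pow_sub (by have := hle i hi; omega)

lemma natDegree_halvedPoly_le [Semiring R] (hle : ∀ i ∈ S, i ≤ J) :
    (halvedPoly R S J).natDegree ≤ J :=
  natDegree_sum_le_of_forall_le _ _ fun i hi => (natDegree_add_le _ _).trans <|
    max_le ((natDegree_X_pow_le _).trans (by have := hle i hi; omega))
      ((natDegree_X_pow_le _).trans (Nat.sub_le _ _))

lemma coeff_halvedPoly_self [Semiring R] (hJ : J ∈ S) (hle : ∀ i ∈ S, i ≤ J)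
    (hpos : ∀ i ∈ S, 0 < i) : (halvedPoly R S J).coeff J = 1 := by
  have hJ0 := hpos J hJ
  rw [halvedPoly, finsetSum_coeff, Finset.sum_eq_single J]
  · rw [coeff_add, coeff_X_pow, coeff_X_pow, if_pos (by omega), if_neg (by omega), add_zero]
  · intro i hi hiJ
    have := hle i hi
    have := hpos i hi
    rw [coeff_add, coeff_X_pow, coeff_X_pow, if_neg (by omega), if_neg (by omega), add_zero]
  · exact fun h => (h hJ).elim

lemma halvedPoly_sq [CommSemiring R] [CharP R 2] (hJ : Odd J) (hodd : ∀ i ∈ S, Odd i)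
    (hle : ∀ i ∈ S, i ≤ J) :
    halvedPoly R S J ^ 2 = ∑ i ∈ S, ((X : R[X]) ^ (J + i) + X ^ (J - i)) := by
  rw [halvedPoly, sum_pow_char]
  refine Finset.sum_congr rfl fun i hi => ?_
  obtain ⟨a, rfl⟩ := hJ
  obtain ⟨b, rfl⟩ := hodd i hi
  have := hle _ hi
  rw [add_pow_char, ← pow_mul, ← pow_mul]
  congr 2 <;> omega

end HalvedPoly

theorem root_multiplicity_two_mod_four_general (S : Finset ℕ) (hS : S.Nonempty)
    (hOdd : ∀ i ∈ S, Odd i) (J : ℕ) (hJ : J = S.max' hS)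
    (P : (ZMod 2)[X])
    (hP : P = ∑ i ∈ S, ((X : (ZMod 2)[X]) ^ (J + i) + (X : (ZMod 2)[X]) ^ (J - i)))
    (dQ : ℕ) (hd : dQ = P.rootMultiplicity 1) :
    dQ % 4 = 2 := by
  have hJS : J ∈ S := hJ ▸ S.max'_mem hS
  have hle : ∀ i ∈ S, i ≤ J := fun i hi => hJ ▸ S.le_max' i hi
  set Q := halvedPoly (ZMod 2) S J
  have hQJ : Q.coeff J = 1 := coeff_halvedPoly_self hJS hle fun i hi => (hOdd i hi).pos
  have hQ0 : Q ≠ 0 := fun h => by simp [h] at hQJ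
  have hPQ : P = Q * Q := by rw [hP, ← halvedPoly_sq (hOdd J hJS) hOdd hle, sq]
  obtain ⟨k, hk⟩ := odd_rootMultiplicity_neg_one_of_reflect_eq (hOdd J hJS) hQ0
    (natDegree_halvedPoly_le hle) (reflect_halvedPoly hle)
  rw [hd, hPQ, rootMultiplicity_mul (mul_ne_zero hQ0 hQ0), show (1 : ZMod 2) = -1 from rfl, hk]
  omega

/-- If all elements of `S` are odd, the multiplicity `d_Q` of the root `1` of
`P(X) = ∑_{i∈S}(X^(J+i) + X^(J-i))` over `ZMod 2` satisfies `d_Q ≡ 2 (mod 4)`. -/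
theorem root_multiplicity_two_mod_four (S : Finset ℕ) (hS : S.Nonempty)
    (hpos : ∀ i ∈ S, 1 ≤ i) (hOdd : ∀ i ∈ S, Odd i) (J : ℕ) (hJ : J = S.max' hS)
    (P : (ZMod 2)[X])
    (hP : P = ∑ i ∈ S, ((X : (ZMod 2)[X]) ^ (J + i) + (X : (ZMod 2)[X]) ^ (J - i)))
    (dQ : ℕ) (hd : dQ = P.rootMultiplicity 1) :
    dQ % 4 = 2 :=
  root_multiplicity_two_mod_four_general S hS hOdd J hJ P hP dQ hd
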